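/- arXiv:1006.0803 — 6 statements merged into one kernel-verified Lean document; each statement's English description precedes it below -/
import Mathlib

section
/- Let η_1,...,η_k : ℝ → ℝ be nonnegative continuous functions, and for a finite nonnegative measure μ define Ī_i(μ) = 1/(1 + ∫ η_i dμ). If μ₁ and μ₂ are two finite nonnegative measures supported in a closed set ω ⊆ ℝ such that for j = 1,2 the function x ↦ ∑_i Ī_i(μ_j) η_i(x) − 1 is ≤ 0 on ω and vanishes on the support of μ_j, then Ī_i(μ₁) = Ī_i(μ₂) for every i = 1,...,k. -/
/-!
Write `a i = ∫ η i ∂μ₁`, `b i = ∫ η i ∂μ₂` and `u t = (1 + t)⁻¹`. Integrating the equilibrium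
condition of `μ₁` against `μ₁` gives `∑ u (a i) * a i = μ₁(ℝ)`, while integrating the inequality
for `μ₂` against `μ₁` gives `∑ u (b i) * a i ≤ μ₁(ℝ)`; symmetrically with the roles exchanged.
Adding the four relations yields `∑ (b i - a i) * (u (a i) - u (b i)) ≤ 0`, and every summand is
nonnegative because `u` is antitone on `[0, ∞)`; so every summand vanishes, forcing
`u (a i) = u (b i)`.
-/

open MeasureTheory

theorem AntitoneOn.eq_of_sum_mul_le {ι : Type*} [Fintype ι] {f : ℝ → ℝ} {s : Set ℝ}
    (hf : AntitoneOn f s) {a b : ι → ℝ} (ha : ∀ i, a i ∈ s) (hb : ∀ i, b i ∈ s)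
    (hab : ∑ i, f (a i) * b i ≤ ∑ i, f (b i) * b i)
    (hba : ∑ i, f (b i) * a i ≤ ∑ i, f (a i) * a i) (i : ι) :
    f (a i) = f (b i) := by
  set t : ι → ℝ := fun i => (b i - a i) * (f (a i) - f (b i))
  have ht_nonneg : ∀ i, 0 ≤ t i := fun i => by
    rcases le_total (a i) (b i) with h | h
    · exact mul_nonneg (sub_nonneg.2 h) (sub_nonneg.2 (hf (ha i) (hb i) h))
    · exact mul_nonneg_of_nonpos_of_nonpos (sub_nonpos.2 h) (sub_nonpos.2 (hf (hb i) (ha i) h))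
  have ht_sum : ∑ i, t i ≤ 0 := by
    have : ∑ i, t i = (∑ i, f (a i) * b i - ∑ i, f (b i) * b i)
        + (∑ i, f (b i) * a i - ∑ i, f (a i) * a i) := by
      simp only [t, ← Finset.sum_sub_distrib, ← Finset.sum_add_distrib]
      exact Finset.sum_congr rfl fun i _ => by ring
    linarith
  have ht_zero : t i = 0 :=
    (Finset.sum_eq_zero_iff_of_nonneg fun i _ => ht_nonneg i).1
      (le_antisymm ht_sum (Finset.sum_nonneg fun i _ => ht_nonneg i)) i (Finset.mem_univ i)
  rcases mul_eq_zero.1 ht_zero with h | h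
  · rw [sub_eq_zero.1 h]
  · exact sub_eq_zero.1 h

theorem antitoneOn_inv_one_add : AntitoneOn (fun t : ℝ => (1 + t)⁻¹) (Set.Ici 0) :=
  fun x hx _ _ hxy => inv_anti₀ (by linarith [Set.mem_Ici.1 hx]) (by linarith)

theorem MeasureTheory.integral_sum_mul_sub_one {α ι : Type*} [MeasurableSpace α] [Fintype ι]
    (μ : Measure α) [IsFiniteMeasure μ] {f : ι → α → ℝ} (hf : ∀ i, Integrable (f i) μ)
    (c : ι → ℝ) :
    ∫ x, (∑ i, c i * f i x - 1) ∂μ = ∑ i, c i * ∫ x, f i x ∂μ - μ.real Set.univ := by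
  rw [integral_sub (integrable_finsetSum _ fun i _ => (hf i).const_mul _) (integrable_const 1),
    integral_finsetSum _ fun i _ => (hf i).const_mul _]
  simp only [integral_const_mul, integral_const, smul_eq_mul, mul_one]

theorem stmt_2_general (k : ℕ) (η : Fin k → ℝ → ℝ)
    (hη_nonneg : ∀ i x, 0 ≤ η i x)
    (ω : Set ℝ)
    (μ₁ μ₂ : Measure ℝ) [IsFiniteMeasure μ₁] [IsFiniteMeasure μ₂]
    (hμ₁ω : μ₁ ωᶜ = 0) (hμ₂ω : μ₂ ωᶜ = 0)
    (hη_int₁ : ∀ i, Integrable (η i) μ₁) (hη_int₂ : ∀ i, Integrable (η i) μ₂)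
    (hle₁ : ∀ x ∈ ω, ∑ i, (1 + ∫ y, η i y ∂μ₁)⁻¹ * η i x - 1 ≤ 0)
    (hle₂ : ∀ x ∈ ω, ∑ i, (1 + ∫ y, η i y ∂μ₂)⁻¹ * η i x - 1 ≤ 0)
    (heq₁ : ∀ᵐ x ∂μ₁, ∑ i, (1 + ∫ y, η i y ∂μ₁)⁻¹ * η i x - 1 = 0)
    (heq₂ : ∀ᵐ x ∂μ₂, ∑ i, (1 + ∫ y, η i y ∂μ₂)⁻¹ * η i x - 1 = 0) :
    ∀ i, (1 + ∫ y, η i y ∂μ₁)⁻¹ = (1 + ∫ y, η i y ∂μ₂)⁻¹ := by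
  have hω₁ : ∀ᵐ x ∂μ₁, x ∈ ω := ae_iff.2 hμ₁ω
  have hω₂ : ∀ᵐ x ∂μ₂, x ∈ ω := ae_iff.2 hμ₂ω
  have self₁ := integral_sum_mul_sub_one μ₁ hη_int₁ fun i => (1 + ∫ y, η i y ∂μ₁)⁻¹
  have self₂ := integral_sum_mul_sub_one μ₂ hη_int₂ fun i => (1 + ∫ y, η i y ∂μ₂)⁻¹
  have cross₁ := integral_sum_mul_sub_one μ₂ hη_int₂ fun i => (1 + ∫ y, η i y ∂μ₁)⁻¹
  have cross₂ := integral_sum_mul_sub_one μ₁ hη_int₁ fun i => (1 + ∫ y, η i y ∂μ₂)⁻¹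
  rw [integral_eq_zero_of_ae heq₁] at self₁
  rw [integral_eq_zero_of_ae heq₂] at self₂
  have hcross₁ := integral_nonpos_of_ae (hω₂.mono hle₁)
  have hcross₂ := integral_nonpos_of_ae (hω₁.mono hle₂)
  rw [cross₁] at hcross₁
  rw [cross₂] at hcross₂
  exact antitoneOn_inv_one_add.eq_of_sum_mul_le
    (fun i => Set.mem_Ici.2 (integral_nonneg (hη_nonneg i)))
    (fun i => Set.mem_Ici.2 (integral_nonneg (hη_nonneg i)))
    (by linarith) (by linarith)

theorem stmt_2 (k : ℕ) (η : Fin k → ℝ → ℝ)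
    (hη_cont : ∀ i, Continuous (η i)) (hη_nonneg : ∀ i x, 0 ≤ η i x)
    (ω : Set ℝ) (hω : IsClosed ω)
    (μ₁ μ₂ : Measure ℝ) [IsFiniteMeasure μ₁] [IsFiniteMeasure μ₂]
    (hμ₁ω : μ₁ ωᶜ = 0) (hμ₂ω : μ₂ ωᶜ = 0)
    (hη_int₁ : ∀ i, Integrable (η i) μ₁) (hη_int₂ : ∀ i, Integrable (η i) μ₂)
    (hle₁ : ∀ x ∈ ω, ∑ i, (1 + ∫ y, η i y ∂μ₁)⁻¹ * η i x - 1 ≤ 0)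
    (hle₂ : ∀ x ∈ ω, ∑ i, (1 + ∫ y, η i y ∂μ₂)⁻¹ * η i x - 1 ≤ 0)
    (heq₁ : ∀ᵐ x ∂μ₁, ∑ i, (1 + ∫ y, η i y ∂μ₁)⁻¹ * η i x - 1 = 0)
    (heq₂ : ∀ᵐ x ∂μ₂, ∑ i, (1 + ∫ y, η i y ∂μ₂)⁻¹ * η i x - 1 = 0) :
    ∀ i, (1 + ∫ y, η i y ∂μ₁)⁻¹ = (1 + ∫ y, η i y ∂μ₂)⁻¹ :=
  stmt_2_general k η hη_nonneg ω μ₁ μ₂ hμ₁ω hμ₂ω hη_int₁ hη_int₂ hle₁ hle₂ heq₁ heq₂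
end

section
/- Let μ be a finite nonnegative measure minimizing L(ν) = −∑_i log(1 + ∫ η_i dν) + ν(ℝ) over nonnegative measures supported in a closed set ω, with η_i continuous nonnegative. Then for every x₀ ∈ ω one has ∑_{i=1}^k η_i(x₀)/(1 + ∫ η_i dμ) − 1 ≤ 0. -/
/-!
Perturb the minimizer by a point mass: `ν_t = μ + t • δ_{x₀}` is admissible for `t ≥ 0` since
`x₀ ∈ ω`, and `L ν_t = (μ univ).toReal - F t` with
`F t = ∑ i, log (1 + ∫ η i ∂μ + t * η i x₀) - t`. Minimality of `μ` makes `t = 0` a one-sided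
maximum of `F`, so `F' 0 = ∑ i, η i x₀ / (1 + ∫ η i ∂μ) - 1 ≤ 0`.
-/

open MeasureTheory Real
open Filter
open scoped NNReal

theorem HasDerivAt.nonpos_of_forall_gt_le {f : ℝ → ℝ} {f' a : ℝ} (hf : HasDerivAt f f' a)
    (hmax : ∀ x > a, f x ≤ f a) : f' ≤ 0 := by
  refine le_of_tendsto (hasDerivAt_iff_tendsto_slope_left_right.1 hf).2
    (eventually_nhdsWithin_of_forall fun x (hx : a < x) => ?_)
  rw [slope_def_field]
  exact div_nonpos_of_nonpos_of_nonneg (sub_nonpos.2 (hmax x hx)) (sub_nonneg.2 hx.le)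

theorem hasDerivAt_log_add_mul {c : ℝ} (hc : 0 < c) (b : ℝ) :
    HasDerivAt (fun t => log (c + t * b)) (b / c) 0 := by
  simpa using ((hasDerivAt_mul_const b).const_add c).log (by simpa using hc.ne' : c + 0 * b ≠ 0)

theorem Continuous.integrable_of_le {α : Type*} [MeasurableSpace α] [TopologicalSpace α]
    [OpensMeasurableSpace α] {μ : Measure α} [IsFiniteMeasure μ] {f : α → ℝ}
    (hf : Continuous f) (h0 : ∀ x, 0 ≤ f x) {M : ℝ} (hM : ∀ x, f x ≤ M) : Integrable f μ :=
  .of_bound hf.aestronglyMeasurable M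
    (ae_of_all _ fun x => by rw [norm_of_nonneg (h0 x)]; exact hM x)

section Perturbation

variable {α : Type*} [MeasurableSpace α] (μ : Measure α) (x : α) (t : ℝ≥0)

theorem integral_add_smul_dirac [MeasurableSingletonClass α] {f : α → ℝ} (hf : Integrable f μ) :
    ∫ y, f y ∂(μ + t • Measure.dirac x) = ∫ y, f y ∂μ + t * f x := by
  rw [integral_add_measure hf ((integrable_dirac (by simp)).smul_measure_nnreal),
    integral_smul_nnreal_measure, integral_dirac, NNReal.smul_def, smul_eq_mul]

theorem toReal_measure_univ_add_smul_dirac [IsFiniteMeasure μ] :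
    ((μ + t • Measure.dirac x) Set.univ).toReal = (μ Set.univ).toReal + t := by
  simp [ENNReal.toReal_add]

theorem add_smul_dirac_compl_eq_zero [MeasurableSingletonClass α] {s : Set α} (hμs : μ sᶜ = 0)
    (hx : x ∈ s) :
    (μ + t • Measure.dirac x) sᶜ = 0 := by
  simp [hμs, hx]

end Perturbation

theorem stmt_6_general (k : ℕ) (η : Fin k → ℝ → ℝ)
    (hη_cont : ∀ i, Continuous (η i)) (hη_nonneg : ∀ i x, 0 ≤ η i x)
    (hη_bdd : ∀ i, ∃ M, ∀ x, η i x ≤ M)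
    (ω : Set ℝ)
    (L : Measure ℝ → ℝ)
    (hL : ∀ ν : Measure ℝ,
      L ν = -∑ i, Real.log (1 + ∫ y, η i y ∂ν) + (ν Set.univ).toReal)
    (μ : Measure ℝ) [IsFiniteMeasure μ] (hμω : μ ωᶜ = 0)
    (hmin : ∀ ν : Measure ℝ, IsFiniteMeasure ν → ν ωᶜ = 0 → L μ ≤ L ν) :
    ∀ x₀ ∈ ω, ∑ i, η i x₀ / (1 + ∫ y, η i y ∂μ) - 1 ≤ 0 := by
  intro x₀ hx₀
  have hint : ∀ i, Integrable (η i) μ := fun i =>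
    (hη_bdd i).elim fun _ hM => (hη_cont i).integrable_of_le (hη_nonneg i) hM
  have hpos : ∀ i, 0 < 1 + ∫ y, η i y ∂μ := fun i =>
    add_pos_of_pos_of_nonneg one_pos (integral_nonneg (hη_nonneg i))
  set F : ℝ → ℝ := fun t => ∑ i, log ((1 + ∫ y, η i y ∂μ) + t * η i x₀) - t
  have hF : HasDerivAt F (∑ i, η i x₀ / (1 + ∫ y, η i y ∂μ) - 1) 0 :=
    (HasDerivAt.fun_sum fun i _ => hasDerivAt_log_add_mul (hpos i) (η i x₀)).sub (hasDerivAt_id 0)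
  refine hF.nonpos_of_forall_gt_le fun t ht => ?_
  have hle := hmin (μ + t.toNNReal • Measure.dirac x₀) inferInstance
    (add_smul_dirac_compl_eq_zero μ x₀ _ hμω hx₀)
  simp only [hL, integral_add_smul_dirac _ _ _ (hint _), toReal_measure_univ_add_smul_dirac,
    Real.coe_toNNReal _ ht.le, ← add_assoc] at hle
  simp only [F, zero_mul, add_zero, sub_zero]
  linarith

theorem stmt_6 (k : ℕ) (η : Fin k → ℝ → ℝ)
    (hη_cont : ∀ i, Continuous (η i)) (hη_nonneg : ∀ i x, 0 ≤ η i x)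
    (hη_bdd : ∀ i, ∃ M, ∀ x, η i x ≤ M)
    (ω : Set ℝ) (hω : IsClosed ω)
    (L : Measure ℝ → ℝ)
    (hL : ∀ ν : Measure ℝ,
      L ν = -∑ i, Real.log (1 + ∫ y, η i y ∂ν) + (ν Set.univ).toReal)
    (μ : Measure ℝ) [IsFiniteMeasure μ] (hμω : μ ωᶜ = 0)
    (hmin : ∀ ν : Measure ℝ, IsFiniteMeasure ν → ν ωᶜ = 0 → L μ ≤ L ν) :
    ∀ x₀ ∈ ω, ∑ i, η i x₀ / (1 + ∫ y, η i y ∂μ) - 1 ≤ 0 :=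
  stmt_6_general k η hη_cont hη_nonneg hη_bdd ω L hL μ hμω hmin
end

section
/- Let ν(t) solve the measure-valued ODE ∂_t ν = (∑_{i=1}^k Ī_i(ν) η_i(x) − 1) ν where Ī_i(ν) = 1/(1 + ∫ η_i dν), with η_i bounded continuous nonnegative. Then along this flow the entropy L(ν) = −∑_i log(1 + ∫ η_i dν) + ν(ℝ) satisfies d/dt L(ν(t)) = −∫ (∑_i Ī_i(ν(t)) η_i(x) − 1)² dν(t) ≤ 0. -/
open MeasureTheory Real BoundedContinuousFunction

/-!
Write `c i = (1 + ∫ η_i dν)⁻¹`, so that `g = ∑ c i η_i - 1`. Differentiating the entropy gives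
`-∑ c i · d/dt ∫ η_i dν + d/dt ν(ℝ) = -∑ c i ∫ g η_i dν + ∫ g dν = -∫ g (∑ c i η_i - 1) dν = -∫ g² dν`.
-/

lemma BoundedContinuousFunction.exists_coe_eq_of_nonneg_of_le {α : Type*}
    [TopologicalSpace α] {f : α → ℝ} (hf : Continuous f) (h0 : ∀ x, 0 ≤ f x)
    (hM : ∃ M, ∀ x, f x ≤ M) : ∃ F : α →ᵇ ℝ, ⇑F = f := by
  obtain ⟨M, hM⟩ := hM
  refine ⟨.mkOfBound ⟨f, hf⟩ M fun x y => ?_, rfl⟩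
  rw [ContinuousMap.coe_mk, Real.dist_eq, abs_sub_le_iff]
  constructor <;> linarith [h0 x, h0 y, hM x, hM y]

lemma integral_sq_eq_sum_mul_integral_mul_sub {α ι : Type*} [MeasurableSpace α] [Fintype ι]
    {μ : Measure α} (c : ι → ℝ) (η : ι → α → ℝ) {g : α → ℝ}
    (hg : ∀ x, g x = ∑ i, c i * η i x - 1) (hg_int : Integrable g μ)
    (hgη_int : ∀ i, Integrable (fun x => g x * η i x) μ) :
    ∫ x, g x ^ 2 ∂μ = ∑ i, c i * ∫ x, g x * η i x ∂μ - ∫ x, g x ∂μ := by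
  have hsq : ∀ x, g x ^ 2 = ∑ i, c i * (g x * η i x) - g x := fun x => by
    conv_lhs => rw [sq]; enter [2]; rw [hg x]
    rw [mul_sub, mul_one, Finset.mul_sum]
    congr 1
    exact Finset.sum_congr rfl fun i _ => by ring
  have hsum_int : ∀ i ∈ Finset.univ, Integrable (fun x => c i * (g x * η i x)) μ :=
    fun i _ => (hgη_int i).const_mul (c i)
  simp only [hsq, integral_sub (integrable_finsetSum _ hsum_int) hg_int,
    integral_finsetSum _ hsum_int, integral_const_mul]

lemma HasDerivAt.neg_sum_log_one_add_add {ι : Type*} [Fintype ι] {F : ι → ℝ → ℝ}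
    {m : ℝ → ℝ} {F' : ι → ℝ} {m' t : ℝ} (hF : ∀ i, HasDerivAt (F i) (F' i) t)
    (hm : HasDerivAt m m' t) (hne : ∀ i, 1 + F i t ≠ 0) :
    HasDerivAt (fun s => -∑ i, Real.log (1 + F i s) + m s)
      (-∑ i, (1 + F i t)⁻¹ * F' i + m') t := by
  have hlog : ∀ i, HasDerivAt (fun s => Real.log (1 + F i s)) ((1 + F i t)⁻¹ * F' i) t :=
    fun i => by simpa only [div_eq_inv_mul] using ((hF i).const_add 1).log (hne i)
  exact (HasDerivAt.fun_sum fun i _ => hlog i).neg.add hm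

theorem stmt_7_general (k : ℕ) (η : Fin k → ℝ → ℝ)
    (hη_cont : ∀ i, Continuous (η i)) (hη_nonneg : ∀ i x, 0 ≤ η i x)
    (hη_bdd : ∀ i, ∃ M, ∀ x, η i x ≤ M)
    (ν : ℝ → Measure ℝ) (hfin : ∀ t, IsFiniteMeasure (ν t))
    (g : ℝ → ℝ → ℝ)
    (hg : ∀ t x, g t x = ∑ i, (1 + ∫ y, η i y ∂(ν t))⁻¹ * η i x - 1)
    (t : ℝ)
    (hode_η : ∀ i, HasDerivAt (fun s => ∫ y, η i y ∂(ν s))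
      (∫ x, g t x * η i x ∂(ν t)) t)
    (hode_mass : HasDerivAt (fun s => ((ν s) Set.univ).toReal)
      (∫ x, g t x ∂(ν t)) t)
    (L : Measure ℝ → ℝ)
    (hL : ∀ m : Measure ℝ,
      L m = -∑ i, Real.log (1 + ∫ y, η i y ∂m) + (m Set.univ).toReal) :
    HasDerivAt (fun s => L (ν s)) (-∫ x, (g t x) ^ 2 ∂(ν t)) t ∧
      -∫ x, (g t x) ^ 2 ∂(ν t) ≤ 0 := by
  choose F hF using fun i =>
    BoundedContinuousFunction.exists_coe_eq_of_nonneg_of_le (hη_cont i) (hη_nonneg i) (hη_bdd i)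
  set c : Fin k → ℝ := fun i => (1 + ∫ y, η i y ∂(ν t))⁻¹
  have hG : g t = ⇑(∑ i, c i • F i - 1) := funext fun x => by simp [hg t x, c, hF]
  have hg_int : Integrable (g t) (ν t) := hG ▸ BoundedContinuousFunction.integrable _ _
  have hgη_int : ∀ i, Integrable (fun x => g t x * η i x) (ν t) := fun i => by
    rw [hG, ← hF i]
    exact ((∑ i, c i • F i - 1) * F i).integrable (ν t)
  have hne : ∀ i, 1 + ∫ y, η i y ∂(ν t) ≠ 0 := fun i =>
    (add_pos_of_pos_of_nonneg one_pos (integral_nonneg (hη_nonneg i))).ne'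
  refine ⟨?_, neg_nonpos.mpr (integral_nonneg fun x => sq_nonneg _)⟩
  rw [integral_sq_eq_sum_mul_integral_mul_sub c η (hg t) hg_int hgη_int, neg_sub,
    sub_eq_neg_add]
  simpa only [hL] using HasDerivAt.neg_sum_log_one_add_add hode_η hode_mass hne

theorem stmt_7 (k : ℕ) (η : Fin k → ℝ → ℝ)
    (hη_cont : ∀ i, Continuous (η i)) (hη_nonneg : ∀ i x, 0 ≤ η i x)
    (hη_bdd : ∀ i, ∃ M, ∀ x, η i x ≤ M)
    (ν : ℝ → Measure ℝ) (hfin : ∀ t, IsFiniteMeasure (ν t))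
    (g : ℝ → ℝ → ℝ)
    (hg : ∀ t x, g t x = ∑ i, (1 + ∫ y, η i y ∂(ν t))⁻¹ * η i x - 1)
    (t : ℝ)
    (hode_η : ∀ i, HasDerivAt (fun s => ∫ y, η i y ∂(ν s))
      (∫ x, g t x * η i x ∂(ν t)) t)
    (hode_mass : HasDerivAt (fun s => ((ν s) Set.univ).toReal)
      (∫ x, g t x ∂(ν t)) t)
    (hint : Integrable (fun x => (g t x) ^ 2) (ν t))
    (L : Measure ℝ → ℝ)
    (hL : ∀ m : Measure ℝ,
      L m = -∑ i, Real.log (1 + ∫ y, η i y ∂m) + (m Set.univ).toReal) :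
    HasDerivAt (fun s => L (ν s)) (-∫ x, (g t x) ^ 2 ∂(ν t)) t ∧
      -∫ x, (g t x) ^ 2 ∂(ν t) ≤ 0 :=
  stmt_7_general k η hη_cont hη_nonneg hη_bdd ν hfin g hg t hode_η hode_mass L hL
end

section
/- Let φ : ℝ → ℝ be Lipschitz with Lipschitz constant L, and suppose ∫_ℝ e^{φ(x)/ε} dx ≤ M. Then for every x ∈ ℝ, φ(x) ≤ ε log(M L / (2ε)), i.e. sup_x φ(x) ≤ ε log(1/ε) + ε log(ML/2). -/
/-!
Since `φ` is `L`-Lipschitz, `φ y ≥ φ x - L |y - x|`, so `e^{φ/ε}` dominates the two-sided exponential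
`e^{φ(x)/ε} e^{-L|y - x|/ε}`, whose integral is `(2ε/L) e^{φ(x)/ε}`. A bound `M` on the mass of
`e^{φ/ε}` therefore gives `e^{φ(x)/ε} ≤ ML/(2ε)`; take logarithms.
-/

open MeasureTheory Real
open scoped NNReal

theorem integral_exp_neg_mul_abs {c : ℝ} (hc : 0 < c) :
    ∫ y : ℝ, exp (-(c * |y|)) = 2 / c := by
  rw [integral_comp_abs (f := fun y => exp (-(c * y))),
    integral_comp_mul_left_Ioi (fun u => exp (-u)) 0 hc, mul_zero, integral_exp_neg_Ioi_zero,
    smul_eq_mul, mul_one, div_eq_mul_inv]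

theorem integral_exp_neg_mul_abs_sub {c : ℝ} (hc : 0 < c) (x : ℝ) :
    ∫ y : ℝ, exp (-(c * |y - x|)) = 2 / c := by
  rw [integral_sub_right_eq_self (fun y => exp (-(c * |y|))) x, integral_exp_neg_mul_abs hc]

theorem LipschitzWith.exp_div_mul_exp_neg_le {L : ℝ≥0} {φ : ℝ → ℝ} (hφ : LipschitzWith L φ)
    {ε : ℝ} (hε : 0 < ε) (x y : ℝ) :
    exp (φ x / ε) * exp (-(L / ε * |y - x|)) ≤ exp (φ y / ε) := by
  rw [← exp_add, exp_le_exp, ← abs_sub_comm, ← Real.dist_eq, div_mul_eq_mul_div, ← sub_eq_add_neg,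
    ← sub_div]
  gcongr
  linarith [hφ.le_add_mul x y]

theorem LipschitzWith.exp_div_le_integral {L : ℝ≥0} (hL : 0 < L) {φ : ℝ → ℝ}
    (hφ : LipschitzWith L φ) {ε : ℝ} (hε : 0 < ε)
    (hint : Integrable (fun y => exp (φ y / ε))) (x : ℝ) :
    2 * ε / L * exp (φ x / ε) ≤ ∫ y, exp (φ y / ε) := by
  have hc : 0 < (L : ℝ) / ε := div_pos hL hε
  calc 2 * ε / L * exp (φ x / ε)
      = ∫ y, exp (φ x / ε) * exp (-(L / ε * |y - x|)) := by
        rw [integral_const_mul, integral_exp_neg_mul_abs_sub hc]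
        field_simp
    _ ≤ ∫ y, exp (φ y / ε) :=
        integral_mono_of_nonneg (.of_forall fun y => by positivity) hint
          (.of_forall (hφ.exp_div_mul_exp_neg_le hε x))

theorem stmt_9_general (L : ℝ≥0) (hL : 0 < L) (φ : ℝ → ℝ) (hφ : LipschitzWith L φ)
    (ε M : ℝ) (hε : 0 < ε)
    (hint : Integrable (fun x => Real.exp (φ x / ε)))
    (hmass : ∫ x, Real.exp (φ x / ε) ≤ M) :
    ∀ x, φ x ≤ ε * Real.log (M * L / (2 * ε)) := by
  intro x
  have hexp : exp (φ x / ε) ≤ M * L / (2 * ε) := by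
    rw [le_div_iff₀ (by positivity)]
    have := (hφ.exp_div_le_integral hL hε hint x).trans hmass
    rw [div_mul_eq_mul_div, div_le_iff₀ (by positivity)] at this
    linarith
  rw [← div_le_iff₀' hε, le_log_iff_exp_le ((exp_pos _).trans_le hexp)]
  exact hexp

theorem stmt_9 (L : ℝ≥0) (hL : 0 < L) (φ : ℝ → ℝ) (hφ : LipschitzWith L φ)
    (ε M : ℝ) (hε : 0 < ε) (hM : 0 < M)
    (hint : Integrable (fun x => Real.exp (φ x / ε)))
    (hmass : ∫ x, Real.exp (φ x / ε) ≤ M) :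
    ∀ x, φ x ≤ ε * Real.log (M * L / (2 * ε)) :=
  stmt_9_general L hL φ hφ ε M hε hint hmass
end

section
/- Let K be a nonnegative continuous function supported in [−ρ, ρ] with ∫ K = 1 and ∫ z K(z) dz = 0, and let φ : ℝ → ℝ be Lipschitz with ‖φ'‖_∞ ≤ L and semiconvex: φ'' ≥ −Λ (in the distributional sense). Then for every x and every ε > 0, H_ε(φ)(x) := ∫ K(z)(e^{(φ(x+εz)−φ(x))/ε} − 1) dz ≥ H(φ'(x⁺)) − Cε ≥ −Cε, where H(p) = ∫ K(z)(e^{pz}−1) dz and C depends only on Λ, ρ, L and K. -/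
/-!
Semiconvexity of `φ` gives the quadratic lower bound
`φ (x + ε z) - φ x ≥ ε d z - Λ ε² z² / 2` with `d = φ'(x⁺)`, so the exponent in `H_ε(φ)(x)`
is at least `d z - Λ ε z² / 2`. Since `e^{a - b} ≥ e^a (1 - b)`, `|d| ≤ L` and `|z| ≤ ρ` on the
support of `K`, this costs at most `Λ ε ρ² e^{Lρ} / 2` against `H(d)`. Finally
`H(d) ≥ ∫ K(z) d z dz = 0` because `e^t - 1 ≥ t`.
-/

open MeasureTheory Real Set Filter
open scoped NNReal

lemma ConvexOn.add_mul_sub_le_of_hasDerivWithinAt_Ioi {f : ℝ → ℝ} {x f' : ℝ}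
    (hf : ConvexOn ℝ univ f) (hf' : HasDerivWithinAt f f' (Ioi x) x) (y : ℝ) :
    f x + f' * (y - x) ≤ f y := by
  rcases lt_trichotomy y x with hyx | rfl | hxy
  · have hslope : slope f x y ≤ f' := by
      refine ge_of_tendsto ((hasDerivWithinAt_iff_tendsto_slope' self_notMem_Ioi).mp hf') ?_
      filter_upwards [self_mem_nhdsWithin] with t (hxt : x < t)
      exact hf.slope_mono (mem_univ x) ⟨mem_univ y, hyx.ne⟩ ⟨mem_univ t, hxt.ne'⟩
        (hyx.trans hxt).le
    rw [slope_def_field, div_le_iff_of_neg (sub_neg.mpr hyx)] at hslope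
    linarith
  · simp
  · have hslope := hf.le_slope_of_hasDerivWithinAt_Ioi (mem_univ x) (mem_univ y) hxy hf'
    rw [slope_def_field, le_div_iff₀ (sub_pos.mpr hxy)] at hslope
    linarith

lemma LipschitzWith.abs_le_of_hasDerivWithinAt_Ioi {f : ℝ → ℝ} {L : ℝ≥0} {x f' : ℝ}
    (hf : LipschitzWith L f) (hf' : HasDerivWithinAt f f' (Ioi x) x) : |f'| ≤ L := by
  refine le_of_tendsto ((hasDerivWithinAt_iff_tendsto_slope' self_notMem_Ioi).mp hf').abs ?_
  filter_upwards [self_mem_nhdsWithin] with t (hxt : x < t)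
  rw [slope_def_field, abs_div, div_le_iff₀ (abs_pos.mpr (sub_ne_zero.mpr hxt.ne'))]
  simpa only [Real.dist_eq] using hf.dist_le_mul t x

lemma le_of_convexOn_add_sq_of_hasDerivWithinAt_Ioi {φ : ℝ → ℝ} {Λ x d : ℝ}
    (hφ : ConvexOn ℝ univ (fun x => φ x + Λ / 2 * x ^ 2))
    (hd : HasDerivWithinAt φ d (Ioi x) x) (y : ℝ) :
    φ x + d * (y - x) - Λ / 2 * (y - x) ^ 2 ≤ φ y := by
  have hsq : HasDerivWithinAt (fun x => Λ / 2 * x ^ 2) (Λ / 2 * (2 * x)) (Ioi x) x := by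
    simpa using ((hasDerivAt_pow 2 x).const_mul (Λ / 2)).hasDerivWithinAt
  have := hφ.add_mul_sub_le_of_hasDerivWithinAt_Ioi (hd.add hsq) y
  linarith

lemma exp_mul_one_sub_le_exp_sub (a b : ℝ) : exp a * (1 - b) ≤ exp (a - b) := by
  rw [sub_eq_add_neg a b, exp_add]
  exact mul_le_mul_of_nonneg_left (one_sub_le_exp_neg b) (exp_nonneg a)

section Kernel

variable {K : ℝ → ℝ} (hK : Continuous K) (hKc : HasCompactSupport K)
  (hK_nonneg : ∀ z, 0 ≤ K z)
include hK hKc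

lemma integrable_mul_of_hasCompactSupport {g : ℝ → ℝ} (hg : Continuous g) :
    Integrable fun z => K z * g z :=
  (hK.mul hg).integrable_of_hasCompactSupport hKc.mul_right

include hK_nonneg

lemma integral_mul_exp_sub_one_nonneg (hK_mean : ∫ z, z * K z = 0) (p : ℝ) :
    0 ≤ ∫ z, K z * (exp (p * z) - 1) := by
  have hlin : ∫ z, K z * (p * z) = 0 := by
    simp_rw [show ∀ z, K z * (p * z) = p * (z * K z) from fun z => by ring]
    rw [integral_const_mul, hK_mean, mul_zero]
  rw [← hlin]
  refine integral_mono (integrable_mul_of_hasCompactSupport hK hKc (by fun_prop))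
    (integrable_mul_of_hasCompactSupport hK hKc (by fun_prop)) fun z => ?_
  exact mul_le_mul_of_nonneg_left (by linarith [add_one_le_exp (p * z)]) (hK_nonneg z)

lemma integral_mul_exp_sub_one_sub_le {ρ p c : ℝ} {u : ℝ → ℝ}
    (hK_supp : Function.support K ⊆ Icc (-ρ) ρ) (hu : Continuous u) (hc : 0 ≤ c)
    (hpu : ∀ z, p * z - c * z ^ 2 ≤ u z) :
    (∫ z, K z * (exp (p * z) - 1)) - c * ρ ^ 2 * exp (|p| * ρ) * ∫ z, K z ≤
      ∫ z, K z * (exp (u z) - 1) := by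
  let M := c * ρ ^ 2 * exp (|p| * ρ)
  have hpoint : ∀ z, K z * (exp (p * z) - 1) - K z * M ≤ K z * (exp (u z) - 1) := by
    intro z
    by_cases hKz : K z = 0
    · simp [hKz]
    have hz : |z| ≤ ρ := abs_le.mpr (hK_supp (Function.mem_support.mpr hKz))
    have hcost : c * z ^ 2 * exp (p * z) ≤ c * ρ ^ 2 * exp (|p| * ρ) := by
      have hpz : p * z ≤ |p| * ρ := (le_abs_self _).trans
        (by rw [abs_mul]; exact mul_le_mul_of_nonneg_left hz (abs_nonneg p))
      have hz2 : z ^ 2 ≤ ρ ^ 2 := sq_le_sq' (abs_le.mp hz).1 (abs_le.mp hz).2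
      gcongr
    have hexp : exp (p * z) * (1 - c * z ^ 2) ≤ exp (u z) :=
      (exp_mul_one_sub_le_exp_sub _ _).trans (exp_le_exp.mpr (by linarith [hpu z]))
    rw [← mul_sub]
    exact mul_le_mul_of_nonneg_left (by linarith) (hK_nonneg z)
  have hKint : Integrable K := hK.integrable_of_hasCompactSupport hKc
  have hHint :=
    integrable_mul_of_hasCompactSupport hK hKc (by fun_prop : Continuous fun z => exp (p * z) - 1)
  calc (∫ z, K z * (exp (p * z) - 1)) - M * ∫ z, K z
      = ∫ z, (K z * (exp (p * z) - 1) - K z * M) := by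
        rw [integral_sub hHint (hKint.mul_const M), integral_mul_const, mul_comm]
    _ ≤ ∫ z, K z * (exp (u z) - 1) :=
        integral_mono (hHint.sub (hKint.mul_const M))
          (integrable_mul_of_hasCompactSupport hK hKc (by fun_prop)) hpoint

end Kernel

theorem stmt_10 (K : ℝ → ℝ) (ρ : ℝ) (hρ : 0 < ρ)
    (hK_cont : Continuous K) (hK_nonneg : ∀ z, 0 ≤ K z)
    (hK_supp : Function.support K ⊆ Icc (-ρ) ρ)
    (hK_mass : ∫ z, K z = 1) (hK_mean : ∫ z, z * K z = 0)
    (L : ℝ≥0) (Λ : ℝ) (hΛ : 0 ≤ Λ) :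
    ∃ C > 0, ∀ φ : ℝ → ℝ, LipschitzWith L φ →
      ConvexOn ℝ Set.univ (fun x => φ x + Λ / 2 * x ^ 2) →
      ∀ x d : ℝ, HasDerivWithinAt φ d (Ioi x) x →
      ∀ ε > 0,
        (∫ z, K z * (Real.exp ((φ (x + ε * z) - φ x) / ε) - 1)) ≥
          (∫ z, K z * (Real.exp (d * z) - 1)) - C * ε ∧
        (∫ z, K z * (Real.exp ((φ (x + ε * z) - φ x) / ε) - 1)) ≥ -(C * ε) := by
  have hKc : HasCompactSupport K :=
    HasCompactSupport.of_support_subset_isCompact isCompact_Icc hK_supp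
  refine ⟨Λ / 2 * ρ ^ 2 * exp (L * ρ) + 1, by positivity, ?_⟩
  intro φ hφ hφ_semiconvex x d hd ε hε
  have hexponent : ∀ z, d * z - Λ / 2 * ε * z ^ 2 ≤ (φ (x + ε * z) - φ x) / ε := by
    intro z
    have := le_of_convexOn_add_sq_of_hasDerivWithinAt_Ioi hφ_semiconvex hd (x + ε * z)
    rw [le_div_iff₀ hε]
    linear_combination this
  have hφ_cont := hφ.continuous
  have hlower := integral_mul_exp_sub_one_sub_le hK_cont hKc hK_nonneg hK_supp
    (by fun_prop : Continuous fun z => (φ (x + ε * z) - φ x) / ε) (by positivity) hexponent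
  have hcost : Λ / 2 * ε * ρ ^ 2 * exp (|d| * ρ) ≤ Λ / 2 * ρ ^ 2 * exp (L * ρ) * ε := by
    have hdL := hφ.abs_le_of_hasDerivWithinAt_Ioi hd
    calc Λ / 2 * ε * ρ ^ 2 * exp (|d| * ρ) ≤ Λ / 2 * ε * ρ ^ 2 * exp (L * ρ) := by gcongr
      _ = Λ / 2 * ρ ^ 2 * exp (L * ρ) * ε := by ring
  have hH := integral_mul_exp_sub_one_nonneg hK_cont hKc hK_nonneg hK_mean d
  rw [hK_mass, mul_one] at hlower
  constructor <;> linarith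
end

section
/- Let φ_ε be uniformly Lipschitz in x on [0,T]×ℝ with ‖∂_x φ_ε‖_∞ ≤ L, and suppose ∂_x φ_ε → ∂_x φ in L^p_loc([0,T]×ℝ) for some p ∈ [1,∞) and a.e. Then for K continuous, nonnegative and compactly supported, H_ε(φ_ε)(t,x) = ∫ K(z)(exp(∫₀¹ z ∂_x φ_ε(t, x+εzθ)dθ) − 1) dz converges to H(∂_x φ)(t,x) = ∫ K(z)(e^{z ∂_x φ(t,x)} − 1) dz in L¹_loc([0,T]×ℝ) as ε → 0. -/
/-!
Write `a_ε(z) = ∫₀¹ z ∂ₓφ_ε(t, x + εzθ) dθ`. If `supp K ⊆ [-R, R]`, both `a_ε(z)` and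
`z ∂ₓφ(t, x)` lie in `[-RL, RL]`, where `exp` is `e^{RL}`-Lipschitz, and
`|a_ε(z) - z ∂ₓφ(t, x)| ≤ R ∫₀¹ |∂ₓφ_ε(t, x + εzθ) - ∂ₓφ(t, x)| dθ`. Integrating over a rectangle
and exchanging the order of integration (Tonelli) leaves, for each `z` and `θ`, the `L¹` norm
of a shifted difference. It is at most the `L¹` distance between `∂ₓφ_ε` and `∂ₓφ` on a slightly
larger rectangle, which tends to `0` by Hölder's inequality and the `L^p` convergence, plus the
`L¹` modulus of continuity of translations of `∂ₓφ` at a shift of size at most `εR`, which tends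
to `0` because compactly supported continuous functions are dense in `L¹`.
-/

open MeasureTheory Real Set intervalIntegral Filter Topology Function
open scoped NNReal ENNReal Pointwise

theorem Real.abs_exp_sub_exp_le_of_abs_le {a b c : ℝ} (ha : |a| ≤ c) (hb : |b| ≤ c) :
    |exp a - exp b| ≤ exp c * |a - b| :=
  (convex_Icc (-c) c).norm_image_sub_le_of_norm_deriv_le (fun _ _ => differentiableAt_exp)
    (fun x hx => by simpa [abs_of_pos (exp_pos x)] using hx.2) (abs_le.1 hb) (abs_le.1 ha)

theorem MeasureTheory.Integrable.mul_exp_sub_one {α : Type*} [MeasurableSpace α]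
    {μ : Measure α} {K b : α → ℝ} (hK : Integrable K μ) (hb : AEStronglyMeasurable b μ) {c : ℝ}
    (hbc : ∀ z, K z ≠ 0 → |b z| ≤ c) : Integrable (fun z => K z * (exp (b z) - 1)) μ := by
  refine (hK.norm.mul_const (exp c + 1)).mono'
    (hK.1.mul ((continuous_exp.comp_aestronglyMeasurable hb).sub aestronglyMeasurable_const))
    (ae_of_all _ fun z => ?_)
  rw [norm_mul]
  by_cases hz : K z = 0
  · simp [hz]
  refine mul_le_mul_of_nonneg_left ?_ (norm_nonneg _)
  have : exp (b z) ≤ exp c := exp_le_exp.2 ((le_abs_self _).trans (hbc z hz))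
  rw [Real.norm_eq_abs, abs_le]
  constructor <;> linarith [exp_pos (b z), exp_pos c]

theorem MeasureTheory.lintegral_lintegral_lintegral_swap {α β γ : Type*} [MeasurableSpace α]
    [MeasurableSpace β] [MeasurableSpace γ] {μ : Measure α} {ν : Measure β} {ρ : Measure γ}
    [SFinite μ] [SFinite ν] [SFinite ρ] {f : α → β → γ → ℝ≥0∞}
    (hf : Measurable fun x : α × β × γ => f x.1 x.2.1 x.2.2) :
    ∫⁻ a, ∫⁻ b, ∫⁻ c, f a b c ∂ρ ∂ν ∂μ = ∫⁻ b, ∫⁻ c, ∫⁻ a, f a b c ∂μ ∂ρ ∂ν := by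
  rw [lintegral_lintegral_swap
    (Measurable.lintegral_prod_right' (hf.comp MeasurableEquiv.prodAssoc.measurable)).aemeasurable]
  exact lintegral_congr fun b => lintegral_lintegral_swap
    (hf.comp (measurable_fst.prodMk (measurable_const.prodMk measurable_snd))).aemeasurable

theorem MeasureTheory.tendsto_lintegral_enorm_of_tendsto_integral_rpow {α ι : Type*}
    [MeasurableSpace α] {μ : Measure α} [IsFiniteMeasure μ] {l : Filter ι} {p : ℝ} (hp : 1 ≤ p)
    {u : ι → α → ℝ} (hu : ∀ i, MemLp (u i) (ENNReal.ofReal p) μ)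
    (h : Tendsto (fun i => ∫ x, |u i x| ^ p ∂μ) l (𝓝 0)) :
    Tendsto (fun i => ∫⁻ x, ‖u i x‖ₑ ∂μ) l (𝓝 0) := by
  have hp0 : 0 < p := zero_lt_one.trans_le hp
  have hLp : Tendsto (fun i => eLpNorm (u i) (ENNReal.ofReal p) μ) l (𝓝 0) := by
    simp_rw [fun i => (hu i).eLpNorm_eq_integral_rpow_norm (by simpa using hp0)
      ENNReal.ofReal_ne_top, ENNReal.toReal_ofReal hp0.le, Real.norm_eq_abs]
    simpa using ENNReal.tendsto_ofReal (h.rpow_const_nhds_zero (inv_pos.2 hp0))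
  have hHolder : ∀ i, ∫⁻ x, ‖u i x‖ₑ ∂μ
      ≤ eLpNorm (u i) (ENNReal.ofReal p) μ * μ univ ^ (1 - 1 / p) := fun i => by
    simpa [eLpNorm_one_eq_lintegral_enorm, hp0.le] using
      eLpNorm_le_eLpNorm_mul_rpow_measure_univ (ENNReal.one_le_ofReal.2 hp) (hu i).1
  have hfin : μ univ ^ (1 - 1 / p) ≠ ⊤ :=
    ENNReal.rpow_ne_top_of_nonneg (by rw [sub_nonneg, div_le_one hp0]; exact hp)
      (measure_ne_top μ univ)
  have hbound := ENNReal.Tendsto.mul_const hLp (.inr hfin)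
  rw [zero_mul] at hbound
  exact tendsto_of_tendsto_of_tendsto_of_le_of_le tendsto_const_nhds hbound (fun _ => zero_le)
    hHolder

theorem tendsto_integral_abs_of_tendsto_lintegral_enorm {α ι : Type*} [MeasurableSpace α]
    {μ : Measure α} {l : Filter ι} {f : ι → α → ℝ}
    (h : Tendsto (fun i => ∫⁻ x, ‖f i x‖ₑ ∂μ) l (𝓝 0)) :
    Tendsto (fun i => ∫ x, |f i x| ∂μ) l (𝓝 0) := by
  refine squeeze_zero (fun i => integral_nonneg fun x => abs_nonneg _) (fun i => ?_)
    ((ENNReal.tendsto_toReal ENNReal.zero_ne_top).comp h)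
  simpa [Real.enorm_eq_ofReal_abs] using
    (le_abs_self _).trans (norm_integral_le_lintegral_norm (μ := μ) fun x => |f i x|)

theorem tendsto_iSup_closedBall_of_tendsto {X ι : Type*} [PseudoMetricSpace X] {x : X}
    {ω : X → ℝ≥0∞} (hω : Tendsto ω (𝓝 x) (𝓝 0)) {l : Filter ι} {r : ι → ℝ}
    (hr : Tendsto r l (𝓝 0)) :
    Tendsto (fun i => ⨆ y ∈ Metric.closedBall x (r i), ω y) l (𝓝 0) := by
  rw [ENNReal.tendsto_nhds_zero] at hω ⊢
  intro ε hε
  obtain ⟨δ, hδ, hωδ⟩ := Metric.eventually_nhds_iff.1 (hω ε hε)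
  filter_upwards [hr.eventually (gt_mem_nhds hδ)] with i hi
  exact iSup₂_le fun y hy => hωδ (lt_of_le_of_lt hy hi)

theorem HasCompactSupport.tendsto_lintegral_enorm_comp_add_sub {G F : Type*}
    [NormedAddCommGroup G] [MeasurableSpace G] [OpensMeasurableSpace G] [LocallyCompactSpace G]
    {μ : Measure G} [IsLocallyFiniteMeasure μ] [NormedAddCommGroup F] {φ : G → F}
    (hφ : HasCompactSupport φ) (hφc : Continuous φ) :
    Tendsto (fun v => ∫⁻ x, ‖φ (x + v) - φ x‖ₑ ∂μ) (𝓝 0) (𝓝 0) := by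
  obtain ⟨V, hV, hV0⟩ := exists_compact_mem_nhds (0 : G)
  set s := tsupport φ + -V
  have hs : IsCompact s := hφ.isCompact.add hV.neg
  -- for small shifts `v ∈ V` the integrand is supported in the compact set `s`, on which the
  -- parametric integral is continuous in `v`
  have hvanish : ∀ v ∈ V, ∀ x ∉ s, φ (x + v) - φ x = 0 := by
    intro v hv x hx
    have hx0 : φ x = 0 := image_eq_zero_of_notMem_tsupport fun h =>
      hx ⟨x, h, 0, by simpa using mem_of_mem_nhds hV0, add_zero x⟩
    have hxv0 : φ (x + v) = 0 := image_eq_zero_of_notMem_tsupport fun h =>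
      hx ⟨x + v, h, -v, by simpa using hv, add_neg_cancel_right x v⟩
    rw [hx0, hxv0, sub_zero]
  have hcont : Continuous fun v => ∫ x in s, ‖φ (x + v) - φ x‖ ∂μ :=
    continuous_parametric_integral_of_continuous (by fun_prop) hs
  have hlim : Tendsto (fun v => ENNReal.ofReal (∫ x in s, ‖φ (x + v) - φ x‖ ∂μ)) (𝓝 0) (𝓝 0) := by
    simpa [comp_def] using (ENNReal.continuous_ofReal.tendsto _).comp (hcont.tendsto 0)
  refine hlim.congr' (eventually_of_mem hV0 fun v hv => ?_)
  rw [ofReal_integral_norm_eq_lintegral_enorm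
    (ContinuousOn.integrableOn_compact hs (by fun_prop)), ← lintegral_indicator hs.measurableSet]
  refine lintegral_congr fun x => ?_
  by_cases hx : x ∈ s
  · simp [hx]
  · simp [hx, hvanish v hv x hx]

theorem MeasureTheory.Integrable.tendsto_lintegral_enorm_comp_add_sub {G F : Type*}
    [NormedAddCommGroup G] [MeasurableSpace G] [BorelSpace G] [LocallyCompactSpace G]
    [SecondCountableTopology G] {μ : Measure G} [μ.Regular] [μ.IsAddRightInvariant]
    [NormedAddCommGroup F] [NormedSpace ℝ F]
    {f : G → F} (hf : Integrable f μ) :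
    Tendsto (fun v => ∫⁻ x, ‖f (x + v) - f x‖ₑ ∂μ) (𝓝 0) (𝓝 0) := by
  rw [ENNReal.tendsto_nhds_zero]
  intro ε hε
  have hε3 : ε / 3 ≠ 0 := (ENNReal.div_pos hε.ne' ENNReal.ofNat_ne_top).ne'
  obtain ⟨φ, hφ, hfφ, hφc, -⟩ := hf.exists_hasCompactSupport_lintegral_sub_le hε3
  filter_upwards [ENNReal.tendsto_nhds_zero.1
    (hφ.tendsto_lintegral_enorm_comp_add_sub (μ := μ) hφc) (ε / 3) (pos_iff_ne_zero.2 hε3)]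
    with v hv
  have hfφm : AEMeasurable (fun x => ‖f x - φ x‖ₑ) μ :=
    (hf.aestronglyMeasurable.sub hφc.aestronglyMeasurable).enorm
  calc ∫⁻ x, ‖f (x + v) - f x‖ₑ ∂μ
      ≤ ∫⁻ x, ‖f (x + v) - φ (x + v)‖ₑ + ‖φ (x + v) - φ x‖ₑ + ‖f x - φ x‖ₑ ∂μ := by
        refine lintegral_mono fun x => ?_
        simpa only [edist_eq_enorm_sub, enorm_sub_rev (φ x)] using
          edist_triangle4 (f (x + v)) (φ (x + v)) (φ x) (f x)
    _ = ∫⁻ x, ‖f x - φ x‖ₑ ∂μ + ∫⁻ x, ‖φ (x + v) - φ x‖ₑ ∂μ + ∫⁻ x, ‖f x - φ x‖ₑ ∂μ := by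
        rw [lintegral_add_right' _ hfφm, lintegral_add_right' _
          (by fun_prop : Continuous fun x => ‖φ (x + v) - φ x‖ₑ).measurable.aemeasurable,
          lintegral_add_right_eq_self (fun x => ‖f x - φ x‖ₑ) v]
    _ ≤ ε / 3 + ε / 3 + ε / 3 := by gcongr
    _ = ε := ENNReal.add_thirds ε

theorem MeasureTheory.setLIntegral_enorm_comp_add_sub_le {G E : Type*} [AddGroup G]
    [MeasurableSpace G] [MeasurableAdd G] {μ : Measure G} [μ.IsAddRightInvariant]
    [NormedAddCommGroup E] [MeasurableSpace E] [BorelSpace E] [SecondCountableTopology E]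
    {u w : G → E} (hu : Measurable u) (hw : Measurable w) {s t : Set G}
    (hs : MeasurableSet s) (ht : MeasurableSet t) (hst : s ⊆ t) {v : G}
    (hsvt : ∀ x ∈ s, x + v ∈ t) :
    ∫⁻ x in s, ‖u (x + v) - w x‖ₑ ∂μ
      ≤ ∫⁻ x in t, ‖u x - w x‖ₑ ∂μ + ∫⁻ x, ‖t.indicator w (x + v) - t.indicator w x‖ₑ ∂μ := by
  have hm : Measurable fun x => t.indicator (fun y => ‖u y - w y‖ₑ) (x + v) :=
    (((hu.sub hw).enorm).indicator ht).comp (measurable_add_const v)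
  calc ∫⁻ x in s, ‖u (x + v) - w x‖ₑ ∂μ
      ≤ ∫⁻ x in s, t.indicator (fun y => ‖u y - w y‖ₑ) (x + v)
          + ‖t.indicator w (x + v) - t.indicator w x‖ₑ ∂μ := by
        refine setLIntegral_mono' hs fun x hx => ?_
        rw [indicator_of_mem (hsvt x hx), indicator_of_mem (hsvt x hx),
          indicator_of_mem (hst hx)]
        simpa only [edist_eq_enorm_sub] using edist_triangle (u (x + v)) (w (x + v)) (w x)
    _ ≤ ∫⁻ x, t.indicator (fun y => ‖u y - w y‖ₑ) (x + v)
          + ‖t.indicator w (x + v) - t.indicator w x‖ₑ ∂μ := setLIntegral_le_lintegral _ _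
    _ = _ := by
        rw [lintegral_add_left hm, lintegral_add_right_eq_self
          (t.indicator fun y => ‖u y - w y‖ₑ) v, lintegral_indicator ht]

theorem abs_intervalIntegral_mul_le {f : ℝ → ℝ} {L : ℝ} (hfL : ∀ θ, |f θ| ≤ L) (z : ℝ) :
    |∫ θ in (0:ℝ)..1, z * f θ| ≤ |z| * L := by
  rw [intervalIntegral.integral_const_mul, abs_mul]
  gcongr
  simpa using intervalIntegral.norm_integral_le_of_norm_le_const (a := 0) (b := 1)
    (f := f) fun θ _ => hfL θ

theorem enorm_exp_intervalIntegral_mul_sub_exp_mul_le {f : ℝ → ℝ} (hf : Measurable f) {L : ℝ}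
    (hfL : ∀ θ, |f θ| ≤ L) {y : ℝ} (hy : |y| ≤ L) {z R : ℝ} (hz : |z| ≤ R) :
    ‖exp (∫ θ in (0:ℝ)..1, z * f θ) - exp (z * y)‖ₑ
      ≤ ENNReal.ofReal (exp (R * L) * R) * ∫⁻ θ in Ioc 0 1, ‖f θ - y‖ₑ := by
  have hL : 0 ≤ L := (abs_nonneg y).trans hy
  have hf_int : IntegrableOn f (Ioc 0 1) :=
    Measure.integrableOn_of_bounded measure_Ioc_lt_top.ne hf.aestronglyMeasurable
      (ae_of_all _ hfL)
  have hsub : (∫ θ in (0:ℝ)..1, z * f θ) - z * y = z * ∫ θ in Ioc 0 1, (f θ - y) := by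
    rw [intervalIntegral.integral_const_mul, integral_of_le zero_le_one,
      integral_sub hf_int (integrableOn_const measure_Ioc_lt_top.ne), setIntegral_const]
    simp [mul_sub]
  have hexp := abs_exp_sub_exp_le_of_abs_le
    ((abs_intervalIntegral_mul_le hfL z).trans (mul_le_mul_of_nonneg_right hz hL))
    (show |z * y| ≤ R * L from abs_mul z y ▸ mul_le_mul hz hy (abs_nonneg y)
      ((abs_nonneg z).trans hz))
  calc ‖exp (∫ θ in (0:ℝ)..1, z * f θ) - exp (z * y)‖ₑ
      ≤ ENNReal.ofReal (exp (R * L)) * (‖z‖ₑ * ‖∫ θ in Ioc 0 1, (f θ - y)‖ₑ) := by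
        rw [← enorm_mul, ← hsub, enorm_eq_ofReal_abs, enorm_eq_ofReal_abs,
          ← ENNReal.ofReal_mul (exp_pos _).le]
        exact ENNReal.ofReal_le_ofReal hexp
    _ ≤ ENNReal.ofReal (exp (R * L)) * (ENNReal.ofReal R * ∫⁻ θ in Ioc 0 1, ‖f θ - y‖ₑ) := by
        rw [enorm_eq_ofReal_abs]
        gcongr
        exact enorm_integral_le_lintegral_enorm _
    _ = _ := by rw [ENNReal.ofReal_mul (exp_pos _).le, mul_assoc]

theorem enorm_integral_mul_exp_sub_le {K : ℝ → ℝ} (hK : Integrable K) {R L : ℝ}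
    (hKR : ∀ z, K z ≠ 0 → |z| ≤ R) {f : ℝ → ℝ → ℝ} (hf : Measurable (uncurry f))
    (hfL : ∀ z θ, |f z θ| ≤ L) {y : ℝ} (hy : |y| ≤ L) :
    ‖(∫ z, K z * (exp (∫ θ in (0:ℝ)..1, z * f z θ) - 1)) - ∫ z, K z * (exp (z * y) - 1)‖ₑ
      ≤ ENNReal.ofReal (exp (R * L) * R) * ∫⁻ z, ‖K z‖ₑ * ∫⁻ θ in Ioc 0 1, ‖f z θ - y‖ₑ := by
  have hL : 0 ≤ L := (abs_nonneg y).trans hy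
  have ha_meas : AEStronglyMeasurable fun z => ∫ θ in (0:ℝ)..1, z * f z θ := by
    simp_rw [integral_of_le zero_le_one]
    exact (measurable_fst.mul hf).stronglyMeasurable.integral_prod_right'.aestronglyMeasurable
  have hA : Integrable fun z => K z * (exp (∫ θ in (0:ℝ)..1, z * f z θ) - 1) :=
    hK.mul_exp_sub_one ha_meas fun z hz =>
      (abs_intervalIntegral_mul_le (hfL z) z).trans (mul_le_mul_of_nonneg_right (hKR z hz) hL)
  have hB : Integrable fun z => K z * (exp (z * y) - 1) :=
    hK.mul_exp_sub_one (by fun_prop) fun z hz => abs_mul z y ▸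
      mul_le_mul (hKR z hz) hy (abs_nonneg y) ((abs_nonneg z).trans (hKR z hz))
  rw [← integral_sub hA hB, ← lintegral_const_mul' _ _ ENNReal.ofReal_ne_top]
  refine (enorm_integral_le_lintegral_enorm _).trans (lintegral_mono fun z => ?_)
  by_cases hz : K z = 0
  · simp [hz]
  rw [← mul_sub, sub_sub_sub_cancel_right, enorm_mul, mul_left_comm]
  gcongr
  exact enorm_exp_intervalIntegral_mul_sub_exp_mul_le (f := f z) (hf.comp measurable_prodMk_left)
    (hfL z) hy (hKR z hz)

/-- `u` stands for `∂ₓφ`: the difference quotient `(φ(t, x + εz) - φ(t, x)) / ε` of the paper is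
written as `∫₀¹ z ∂ₓφ(t, x + εzθ) dθ`. -/
noncomputable def nonlocalHamiltonian (K : ℝ → ℝ) (ε : ℝ) (u : ℝ → ℝ → ℝ) (t x : ℝ) : ℝ :=
  ∫ z, K z * (exp (∫ θ in (0:ℝ)..1, z * u t (x + ε * z * θ)) - 1)

noncomputable def localHamiltonian (K : ℝ → ℝ) (u : ℝ → ℝ → ℝ) (t x : ℝ) : ℝ :=
  ∫ z, K z * (exp (z * u t x) - 1)

theorem lintegral_enorm_nonlocalHamiltonian_sub_localHamiltonian_le {K : ℝ → ℝ}
    (hKm : Measurable K) (hK : Integrable K) {R L : ℝ} (hKR : ∀ z, K z ≠ 0 → |z| ≤ R)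
    {u v : ℝ → ℝ → ℝ} (hu : Measurable (uncurry u)) (hv : Measurable (uncurry v))
    (huL : ∀ t x, |u t x| ≤ L) (hvL : ∀ t x, |v t x| ≤ L) {ε : ℝ} {s s' : Set (ℝ × ℝ)}
    (hs : MeasurableSet s) (hs' : MeasurableSet s') (hss' : s ⊆ s')
    (hshift : ∀ q ∈ s, ∀ h, |h| ≤ |ε| * R → q + (0, h) ∈ s') :
    ∫⁻ q in s, ‖nonlocalHamiltonian K ε u q.1 q.2 - localHamiltonian K v q.1 q.2‖ₑ
      ≤ ENNReal.ofReal (exp (R * L) * R) * ((∫⁻ z, ‖K z‖ₑ) *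
        ((∫⁻ q in s', ‖u q.1 q.2 - v q.1 q.2‖ₑ) + ⨆ h ∈ Metric.closedBall (0:ℝ) (|ε| * R),
          ∫⁻ q, ‖s'.indicator (uncurry v) (q + (0, h)) - s'.indicator (uncurry v) q‖ₑ)) := by
  set C := ENNReal.ofReal (exp (R * L) * R)
  set Δ := ∫⁻ q in s', ‖u q.1 q.2 - v q.1 q.2‖ₑ
  set M := ⨆ h ∈ Metric.closedBall (0:ℝ) (|ε| * R),
    ∫⁻ q, ‖s'.indicator (uncurry v) (q + (0, h)) - s'.indicator (uncurry v) q‖ₑ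
  have hshifted : ∀ z, K z ≠ 0 → ∀ θ ∈ Ioc (0:ℝ) 1,
      ∫⁻ q in s, ‖u q.1 (q.2 + ε * z * θ) - v q.1 q.2‖ₑ ≤ Δ + M := by
    intro z hz θ hθ
    have hh : |ε * z * θ| ≤ |ε| * R :=
      calc |ε * z * θ| = |ε| * |z| * θ := by rw [abs_mul, abs_mul, abs_of_pos hθ.1]
        _ ≤ |ε| * R := (mul_le_of_le_one_right (by positivity) hθ.2).trans
          (mul_le_mul_of_nonneg_left (hKR z hz) (abs_nonneg ε))
    calc ∫⁻ q in s, ‖u q.1 (q.2 + ε * z * θ) - v q.1 q.2‖ₑ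
        = ∫⁻ q in s, ‖uncurry u (q + (0, ε * z * θ)) - uncurry v q‖ₑ := by
          simp only [uncurry_def, Prod.fst_add, Prod.snd_add, add_zero]
      _ ≤ Δ + ∫⁻ q, ‖s'.indicator (uncurry v) (q + (0, ε * z * θ))
            - s'.indicator (uncurry v) q‖ₑ :=
          setLIntegral_enorm_comp_add_sub_le hu hv hs hs' hss' fun q hq => hshift q hq _ hh
      _ ≤ Δ + M := by
          gcongr
          exact le_iSup₂_of_le (ε * z * θ) (by simpa using hh) le_rfl
  calc ∫⁻ q in s, ‖nonlocalHamiltonian K ε u q.1 q.2 - localHamiltonian K v q.1 q.2‖ₑ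
      ≤ ∫⁻ q in s, C * ∫⁻ z, ‖K z‖ₑ * ∫⁻ θ in Ioc 0 1,
          ‖u q.1 (q.2 + ε * z * θ) - v q.1 q.2‖ₑ :=
        lintegral_mono fun q => enorm_integral_mul_exp_sub_le hK hKR (by fun_prop)
          (fun _ _ => huL _ _) (hvL q.1 q.2)
    _ = C * ∫⁻ z, ∫⁻ θ in Ioc 0 1, ∫⁻ q in s,
          ‖K z‖ₑ * ‖u q.1 (q.2 + ε * z * θ) - v q.1 q.2‖ₑ := by
        rw [lintegral_const_mul' _ _ ENNReal.ofReal_ne_top]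
        simp_rw [← lintegral_const_mul' _ _ enorm_ne_top]
        rw [lintegral_lintegral_lintegral_swap (by fun_prop)]
    _ ≤ C * ∫⁻ z, ∫⁻ θ in Ioc (0:ℝ) 1, ‖K z‖ₑ * (Δ + M) := by
        refine mul_le_mul_of_nonneg_left (lintegral_mono fun z =>
          setLIntegral_mono' measurableSet_Ioc fun θ hθ => ?_) zero_le
        rw [lintegral_const_mul' _ _ enorm_ne_top]
        by_cases hz : K z = 0
        · simp [hz]
        · exact mul_le_mul_of_nonneg_left (hshifted z hz θ hθ) zero_le
    _ = C * ((∫⁻ z, ‖K z‖ₑ) * (Δ + M)) := by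
        simp_rw [setLIntegral_const, Real.volume_Ioc, sub_zero, ENNReal.ofReal_one, mul_one]
        rw [lintegral_mul_const'' _ hK.1.enorm]

theorem tendsto_lintegral_enorm_nonlocalHamiltonian_sub_localHamiltonian {K : ℝ → ℝ}
    (hKm : Measurable K) (hK : Integrable K) {R L : ℝ} (hKR : ∀ z, K z ≠ 0 → |z| ≤ R)
    {u : ℕ → ℝ → ℝ → ℝ} {v : ℝ → ℝ → ℝ} (hu : ∀ n, Measurable (uncurry (u n)))
    (hv : Measurable (uncurry v)) (huL : ∀ n t x, |u n t x| ≤ L) (hvL : ∀ t x, |v t x| ≤ L)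
    {ε : ℕ → ℝ} (hε : Tendsto ε atTop (𝓝 0)) {s s' : Set (ℝ × ℝ)} (hs : MeasurableSet s)
    (hs' : MeasurableSet s') (hs'_fin : volume s' ≠ ⊤)
    (hshift : ∀ q ∈ s, ∀ h, |h| ≤ 1 → q + (0, h) ∈ s')
    (hL1 : Tendsto (fun n => ∫⁻ q in s', ‖u n q.1 q.2 - v q.1 q.2‖ₑ) atTop (𝓝 0)) :
    Tendsto (fun n => ∫⁻ q in s,
      ‖nonlocalHamiltonian K (ε n) (u n) q.1 q.2 - localHamiltonian K v q.1 q.2‖ₑ) atTop (𝓝 0) := by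
  have hεR : Tendsto (fun n => |ε n| * R) atTop (𝓝 0) := by simpa using hε.abs.mul_const R
  have hG : Integrable (s'.indicator (uncurry v)) :=
    (Measure.integrableOn_of_bounded hs'_fin hv.aestronglyMeasurable
      (ae_of_all _ fun q => hvL q.1 q.2)).integrable_indicator hs'
  have htransl : Tendsto (fun n => ⨆ h ∈ Metric.closedBall (0:ℝ) (|ε n| * R), ∫⁻ q,
      ‖s'.indicator (uncurry v) (q + (0, h)) - s'.indicator (uncurry v) q‖ₑ) atTop (𝓝 0) :=
    tendsto_iSup_closedBall_of_tendsto (hG.tendsto_lintegral_enorm_comp_add_sub.comp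
      ((continuous_const.prodMk continuous_id).tendsto' 0 0 rfl)) hεR
  have hbound := ENNReal.Tendsto.const_mul (ENNReal.Tendsto.const_mul (hL1.add htransl)
    (.inr hK.2.ne)) (.inr (ENNReal.ofReal_ne_top (r := exp (R * L) * R)))
  simp only [add_zero, mul_zero] at hbound
  refine tendsto_of_tendsto_of_tendsto_of_le_of_le' tendsto_const_nhds hbound
    (.of_forall fun _ => zero_le) ?_
  filter_upwards [hεR.eventually (ge_mem_nhds zero_lt_one)] with n hn
  exact lintegral_enorm_nonlocalHamiltonian_sub_localHamiltonian_le hKm hK hKR (hu n) hv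
    (huL n) hvL hs hs' (fun q hq => by simpa [Prod.mk_zero_zero] using hshift q hq 0 (by simp))
    fun q hq h hh => hshift q hq h (hh.trans hn)

theorem add_mk_zero_mem_Icc_prod_Icc {a b c d h : ℝ} {q : ℝ × ℝ} (hq : q ∈ Icc a b ×ˢ Icc c d)
    (hh : |h| ≤ 1) : q + (0, h) ∈ Icc a b ×ˢ Icc (c - 1) (d + 1) := by
  obtain ⟨hq₁, hq₂, hq₂'⟩ := hq
  obtain ⟨hh₁, hh₂⟩ := abs_le.1 hh
  exact ⟨by simpa using hq₁, by simp only [Prod.snd_add]; constructor <;> linarith⟩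

theorem stmt_19_general (L : ℝ≥0)
    (K : ℝ → ℝ) (hK_cont : Continuous K)
    (hK_supp : HasCompactSupport K)
    (εn : ℕ → ℝ)
    (hεn : Filter.Tendsto εn Filter.atTop (nhds 0))
    (gε : ℕ → ℝ → ℝ → ℝ) (g : ℝ → ℝ → ℝ)
    (hgε_meas : ∀ n, Measurable (Function.uncurry (gε n)))
    (hg_meas : Measurable (Function.uncurry g))
    (hgε_bdd : ∀ n t x, |gε n t x| ≤ L) (hg_bdd : ∀ t x, |g t x| ≤ L)
    (p : ℝ) (hp : 1 ≤ p)
    (hLp : ∀ a b c d : ℝ, Filter.Tendsto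
      (fun n => ∫ q in Icc a b ×ˢ Icc c d, |gε n q.1 q.2 - g q.1 q.2| ^ p
        ∂(volume : Measure (ℝ × ℝ)))
      Filter.atTop (nhds 0)) :
    ∀ a b c d : ℝ, Filter.Tendsto
      (fun n => ∫ q in Icc a b ×ˢ Icc c d,
        |(∫ z, K z * (Real.exp (∫ θ in (0:ℝ)..1, z * gε n q.1 (q.2 + εn n * z * θ)) - 1))
          - (∫ z, K z * (Real.exp (z * g q.1 q.2) - 1))|
        ∂(volume : Measure (ℝ × ℝ)))
      Filter.atTop (nhds 0) := by
  intro a b c d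
  obtain ⟨R, hR⟩ := hK_supp.isBounded.subset_closedBall 0
  have hKR : ∀ z, K z ≠ 0 → |z| ≤ R := fun z hz => by simpa using hR (subset_tsupport K hz)
  set s' := Icc a b ×ˢ Icc (c - 1) (d + 1)
  have hs'_fin : volume s' ≠ ⊤ := (isCompact_Icc.prod isCompact_Icc).measure_lt_top.ne
  have : IsFiniteMeasure (volume.restrict s') := isFiniteMeasure_restrict.2 hs'_fin
  have hdiff_bdd : ∀ n (q : ℝ × ℝ), ‖gε n q.1 q.2 - g q.1 q.2‖ ≤ 2 * L := fun n q =>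
    (abs_sub _ _).trans (by linarith [hgε_bdd n q.1 q.2, hg_bdd q.1 q.2])
  have hL1 : Tendsto (fun n => ∫⁻ q in s', ‖gε n q.1 q.2 - g q.1 q.2‖ₑ) atTop (𝓝 0) :=
    tendsto_lintegral_enorm_of_tendsto_integral_rpow hp
      (fun n => MemLp.of_bound ((hgε_meas n).sub hg_meas).aestronglyMeasurable _
        (ae_of_all _ (hdiff_bdd n)))
      (hLp a b (c - 1) (d + 1))
  exact tendsto_integral_abs_of_tendsto_lintegral_enorm
    (tendsto_lintegral_enorm_nonlocalHamiltonian_sub_localHamiltonian hK_cont.measurable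
      (hK_cont.integrable_of_hasCompactSupport hK_supp) hKR hgε_meas hg_meas hgε_bdd hg_bdd hεn
      (measurableSet_Icc.prod measurableSet_Icc) (measurableSet_Icc.prod measurableSet_Icc)
      hs'_fin (fun _ hq _ hh => add_mk_zero_mem_Icc_prod_Icc hq hh) hL1)

theorem stmt_19 (T : ℝ) (hT : 0 < T) (L : ℝ≥0)
    (K : ℝ → ℝ) (hK_cont : Continuous K) (hK_nonneg : ∀ z, 0 ≤ K z)
    (hK_supp : HasCompactSupport K)
    (εn : ℕ → ℝ) (hεn_pos : ∀ n, 0 < εn n)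
    (hεn : Filter.Tendsto εn Filter.atTop (nhds 0))
    (gε : ℕ → ℝ → ℝ → ℝ) (g : ℝ → ℝ → ℝ)
    (hgε_meas : ∀ n, Measurable (Function.uncurry (gε n)))
    (hg_meas : Measurable (Function.uncurry g))
    (hgε_bdd : ∀ n t x, |gε n t x| ≤ L) (hg_bdd : ∀ t x, |g t x| ≤ L)
    (p : ℝ) (hp : 1 ≤ p)
    (hLp : ∀ a b c d : ℝ, Filter.Tendsto
      (fun n => ∫ q in Icc a b ×ˢ Icc c d, |gε n q.1 q.2 - g q.1 q.2| ^ p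
        ∂(volume : Measure (ℝ × ℝ)))
      Filter.atTop (nhds 0))
    (hae : ∀ᵐ q ∂(volume : Measure (ℝ × ℝ)),
      Filter.Tendsto (fun n => gε n q.1 q.2) Filter.atTop (nhds (g q.1 q.2))) :
    ∀ a b c d : ℝ, Filter.Tendsto
      (fun n => ∫ q in Icc a b ×ˢ Icc c d,
        |(∫ z, K z * (Real.exp (∫ θ in (0:ℝ)..1, z * gε n q.1 (q.2 + εn n * z * θ)) - 1))
          - (∫ z, K z * (Real.exp (z * g q.1 q.2) - 1))|
        ∂(volume : Measure (ℝ × ℝ)))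
      Filter.atTop (nhds 0) :=
  stmt_19_general L K hK_cont hK_supp εn hεn gε g hgε_meas hg_meas hgε_bdd hg_bdd p hp hLp
end
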